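/- Let m ≥ 2 and suppose the z-th row of an m×m row-stochastic matrix P is a convex combination of the other rows: P_z = ∑_{i≠z} λ_i P_i with λ_i ≥ 0 and ∑_{i≠z} λ_i = 1, and suppose there exist i, j ≠ z with λ_i > 0, λ_j > 0 and P_i ≠ P_j. Then for every u ∈ Δ^m with u_z > 0 there exists ū ∈ Δ^m with ū_z = 0 and φ(ū;P) > φ(u;P); consequently every maximizer u* of φ(·;P) over Δ^m satisfies u*_z = 0. -/
import Mathlib


open Finset

/-- The probability simplex Δ^m. -/
def simplex (m : ℕ) : Set (Fin m → ℝ) :=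
  {u | (∀ z, 0 ≤ u z) ∧ ∑ z, u z = 1}

/-- Shannon entropy (base 2) of a nonnegative vector, with `0 · log₂ 0 = 0`. -/
noncomputable def entH {m : ℕ} (v : Fin m → ℝ) : ℝ :=
  ∑ y, -(v y * Real.logb 2 (v y))

/-- The channel function φ(u;P) = h(uᵀP) − ∑_z u_z h(P_z). -/
noncomputable def phi {m : ℕ} (u : Fin m → ℝ) (P : Matrix (Fin m) (Fin m) ℝ) : ℝ :=
  entH (fun y => ∑ z, u z * P z y) - ∑ z, u z * entH (P z)


noncomputable def negent {m : ℕ} (v : Fin m → ℝ) : ℝ := ∑ y, v y * Real.log (v y)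

lemma entH' {m : ℕ} (v : Fin m → ℝ) :
    (∑ y, -(v y * Real.logb 2 (v y))) = -negent v / Real.log 2 := by
  rw [negent, ← Finset.sum_neg_distrib, Finset.sum_div]
  exact Finset.sum_congr rfl fun y _ => by
    rw [← Real.log_div_log]; ring

lemma negent_mix_le {m : ℕ} {ι : Type*} (s : Finset ι) (w : ι → ℝ) (p : ι → Fin m → ℝ)
    (hw : ∀ i ∈ s, 0 ≤ w i) (hw1 : ∑ i ∈ s, w i = 1) (hp : ∀ i ∈ s, ∀ y, 0 ≤ p i y) :
    negent (fun y => ∑ i ∈ s, w i * p i y) ≤ ∑ i ∈ s, w i * negent (p i) := by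
  have h1 : ∀ y : Fin m, (∑ i ∈ s, w i * p i y) * Real.log (∑ i ∈ s, w i * p i y)
      ≤ ∑ i ∈ s, w i * (p i y * Real.log (p i y)) := fun y => by
    have := Real.convexOn_mul_log.map_sum_le (p := fun i => p i y) hw hw1
      (fun i hi => Set.mem_Ici.2 (hp i hi y))
    simpa [smul_eq_mul] using this
  calc negent (fun y => ∑ i ∈ s, w i * p i y)
      ≤ ∑ y, ∑ i ∈ s, w i * (p i y * Real.log (p i y)) :=
        Finset.sum_le_sum fun y _ => h1 y
    _ = ∑ i ∈ s, w i * negent (p i) := by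
        rw [Finset.sum_comm]
        simp [negent, Finset.mul_sum]

lemma negent_two_lt {m : ℕ} {v w : Fin m → ℝ} (hv : ∀ y, 0 ≤ v y) (hw : ∀ y, 0 ≤ w y)
    (hne : v ≠ w) {a b : ℝ} (ha : 0 < a) (hb : 0 < b) (hab : a + b = 1) :
    negent (fun y => a * v y + b * w y) < a * negent v + b * negent w := by
  obtain ⟨y0, hy0⟩ : ∃ y, v y ≠ w y := by
    by_contra h; push_neg at h; exact hne (funext h)
  have hstrict : (a * v y0 + b * w y0) * Real.log (a * v y0 + b * w y0)
      < a * (v y0 * Real.log (v y0)) + b * (w y0 * Real.log (w y0)) := by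
    have := Real.strictConvexOn_mul_log.2 (Set.mem_Ici.2 (hv y0)) (Set.mem_Ici.2 (hw y0))
      hy0 ha hb hab
    simpa [smul_eq_mul] using this
  have hweak : ∀ y, (a * v y + b * w y) * Real.log (a * v y + b * w y)
      ≤ a * (v y * Real.log (v y)) + b * (w y * Real.log (w y)) := fun y => by
    have := Real.convexOn_mul_log.2 (Set.mem_Ici.2 (hv y)) (Set.mem_Ici.2 (hw y)) ha.le hb.le hab
    simpa [smul_eq_mul] using this
  calc negent (fun y => a * v y + b * w y)
      < ∑ y, (a * (v y * Real.log (v y)) + b * (w y * Real.log (w y))) :=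
        Finset.sum_lt_sum (fun y _ => hweak y) ⟨y0, Finset.mem_univ y0, hstrict⟩
    _ = a * negent v + b * negent w := by
        simp [negent, Finset.mul_sum, Finset.sum_add_distrib]

lemma key_lt {m : ℕ} (P : Matrix (Fin m) (Fin m) ℝ)
    (hPnonneg : ∀ z y, 0 ≤ P z y)
    (z : Fin m) (lam : Fin m → ℝ)
    (hlamnonneg : ∀ i, i ≠ z → 0 ≤ lam i)
    (hlamsum : ∑ i ∈ Finset.univ.erase z, lam i = 1)
    (hconv : ∀ y, P z y = ∑ i ∈ Finset.univ.erase z, lam i * P i y)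
    (i : Fin m) (hi : i ≠ z) (hli : 0 < lam i) (hPi : P i ≠ P z) :
    negent (P z) < ∑ k ∈ Finset.univ.erase z, lam k * negent (P k) := by
  have hiS : i ∈ Finset.univ.erase z := Finset.mem_erase.2 ⟨hi, Finset.mem_univ i⟩
  set b : ℝ := ∑ k ∈ (Finset.univ.erase z).erase i, lam k with hbdef
  have hnn : ∀ k ∈ (Finset.univ.erase z).erase i, 0 ≤ lam k := fun k hk =>
    hlamnonneg k (Finset.mem_erase.1 (Finset.mem_erase.1 hk).2).1
  have hb0 : 0 ≤ b := Finset.sum_nonneg hnn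
  have hsplit : lam i + b = 1 := by
    rw [hbdef, Finset.add_sum_erase _ _ hiS, hlamsum]
  have hPzsplit : ∀ y, P z y = lam i * P i y +
      ∑ k ∈ (Finset.univ.erase z).erase i, lam k * P k y := fun y => by
    rw [hconv y, ← Finset.add_sum_erase _ _ hiS]
  have hbne : b ≠ 0 := by
    intro h
    have hall : ∀ k ∈ (Finset.univ.erase z).erase i, lam k = 0 :=
      (Finset.sum_eq_zero_iff_of_nonneg hnn).1 (by rw [← hbdef]; exact h)
    have hl1 : lam i = 1 := by linarith [hsplit, h]
    apply hPi
    funext y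
    rw [hPzsplit y, Finset.sum_eq_zero fun k hk => by rw [hall k hk, zero_mul], hl1]
    ring
  have hb : 0 < b := lt_of_le_of_ne hb0 (Ne.symm hbne)
  set Q : Fin m → ℝ := fun y => b⁻¹ * ∑ k ∈ (Finset.univ.erase z).erase i, lam k * P k y
    with hQdef
  have hQnn : ∀ y, 0 ≤ Q y := fun y => mul_nonneg (inv_nonneg.2 hb0)
    (Finset.sum_nonneg fun k hk => mul_nonneg (hnn k hk) (hPnonneg k y))
  have hrepr : ∀ y, P z y = lam i * P i y + b * Q y := fun y => by
    rw [hQdef]; dsimp only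
    rw [← mul_assoc, mul_inv_cancel₀ hbne, one_mul]
    exact hPzsplit y
  have hPiQ : P i ≠ Q := by
    intro h
    apply hPi
    funext y
    rw [hrepr y, ← h]
    linear_combination (-(P i y)) * hsplit
  have hjensen : negent Q ≤ ∑ k ∈ (Finset.univ.erase z).erase i, (lam k / b) * negent (P k) := by
    have := negent_mix_le ((Finset.univ.erase z).erase i) (fun k => lam k / b) (fun k => P k)
      (fun k hk => div_nonneg (hnn k hk) hb0)
      (by rw [← Finset.sum_div, ← hbdef, div_self hbne])
      (fun k hk y => hPnonneg k y)
    have hQeq : Q = fun y => ∑ k ∈ (Finset.univ.erase z).erase i, (lam k / b) * P k y := by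
      funext y
      rw [hQdef]; dsimp only
      rw [Finset.mul_sum]
      exact Finset.sum_congr rfl fun k _ => by ring
    rw [hQeq]
    exact this
  have hstrict : negent (P z) < lam i * negent (P i) + b * negent Q := by
    have : negent (fun y => lam i * P i y + b * Q y) < lam i * negent (P i) + b * negent Q :=
      negent_two_lt (fun y => hPnonneg i y) hQnn hPiQ hli hb hsplit
    have heq : negent (P z) = negent (fun y => lam i * P i y + b * Q y) := by
      congr 1; funext y; exact hrepr y
    rw [heq]; exact this
  calc negent (P z) < lam i * negent (P i) + b * negent Q := hstrict
    _ ≤ lam i * negent (P i) + b * ∑ k ∈ (Finset.univ.erase z).erase i, (lam k / b) * negent (P k) :=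
        by nlinarith [hjensen]
    _ = lam i * negent (P i) + ∑ k ∈ (Finset.univ.erase z).erase i, lam k * negent (P k) := by
        rw [Finset.mul_sum]
        congr 1
        exact Finset.sum_congr rfl fun k _ => by field_simp
    _ = ∑ k ∈ Finset.univ.erase z, lam k * negent (P k) :=
        Finset.add_sum_erase _ (fun k => lam k * negent (P k)) hiS


lemma entH_eq {m : ℕ} (v : Fin m → ℝ) : entH v = -negent v / Real.log 2 := entH' v

lemma key_entH {m : ℕ} (P : Matrix (Fin m) (Fin m) ℝ)
    (hPnonneg : ∀ z y, 0 ≤ P z y)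
    (z : Fin m) (lam : Fin m → ℝ)
    (hlamnonneg : ∀ i, i ≠ z → 0 ≤ lam i)
    (hlamsum : ∑ i ∈ Finset.univ.erase z, lam i = 1)
    (hconv : ∀ y, P z y = ∑ i ∈ Finset.univ.erase z, lam i * P i y)
    (hnontriv : ∃ i j : Fin m, i ≠ z ∧ j ≠ z ∧ 0 < lam i ∧ 0 < lam j ∧ P i ≠ P j) :
    ∑ k ∈ Finset.univ.erase z, lam k * entH (P k) < entH (P z) := by
  obtain ⟨i, j, hi, hj, hli, hlj, hij⟩ := hnontriv
  have hneg : negent (P z) < ∑ k ∈ Finset.univ.erase z, lam k * negent (P k) := by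
    by_cases h : P i = P z
    · exact key_lt P hPnonneg z lam hlamnonneg hlamsum hconv j hj hlj
        (fun hc => hij (h.trans hc.symm))
    · exact key_lt P hPnonneg z lam hlamnonneg hlamsum hconv i hi hli h
  have hlog2 : 0 < Real.log 2 := Real.log_pos one_lt_two
  calc ∑ k ∈ Finset.univ.erase z, lam k * entH (P k)
      = (∑ k ∈ Finset.univ.erase z, -(lam k * negent (P k))) / Real.log 2 := by
        rw [Finset.sum_div]
        exact Finset.sum_congr rfl fun k _ => by rw [entH_eq]; ring
    _ = (-∑ k ∈ Finset.univ.erase z, lam k * negent (P k)) / Real.log 2 := by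
        rw [Finset.sum_neg_distrib]
    _ < -negent (P z) / Real.log 2 :=
        (div_lt_div_iff_of_pos_right hlog2).2 (neg_lt_neg hneg)
    _ = entH (P z) := (entH_eq _).symm

/-- if row z of P is a (nontrivially weighted) convex combination of
the other rows, then any u ∈ Δ^m with u_z > 0 is strictly improved by some
ū ∈ Δ^m with ū_z = 0; hence every maximizer u* of φ(·;P) on Δ^m has u*_z = 0. -/
theorem convex_combination_row_zero_weight {m : ℕ} (hm : 2 ≤ m)
    (P : Matrix (Fin m) (Fin m) ℝ)
    (hPnonneg : ∀ z y, 0 ≤ P z y) (hProw : ∀ z, ∑ y, P z y = 1)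
    (z : Fin m) (lam : Fin m → ℝ)
    (hlamnonneg : ∀ i, i ≠ z → 0 ≤ lam i)
    (hlamsum : ∑ i ∈ Finset.univ.erase z, lam i = 1)
    (hconv : ∀ y, P z y = ∑ i ∈ Finset.univ.erase z, lam i * P i y)
    (hnontriv : ∃ i j : Fin m, i ≠ z ∧ j ≠ z ∧ 0 < lam i ∧ 0 < lam j ∧ P i ≠ P j) :
    (∀ u ∈ simplex m, 0 < u z →
      ∃ ubar ∈ simplex m, ubar z = 0 ∧ phi u P < phi ubar P) ∧
    (∀ ustar ∈ simplex m, (∀ u ∈ simplex m, phi u P ≤ phi ustar P) →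
      ustar z = 0) := by
  have hkey := key_entH P hPnonneg z lam hlamnonneg hlamsum hconv hnontriv
  have main : ∀ u ∈ simplex m, 0 < u z →
      ∃ ubar ∈ simplex m, ubar z = 0 ∧ phi u P < phi ubar P := by
    intro u hu huz
    set ubar : Fin m → ℝ := fun k => if k = z then 0 else u k + u z * lam k with hubar
    have hubarz : ubar z = 0 := by simp [hubar]
    have husum : u z + ∑ k ∈ Finset.univ.erase z, u k = 1 := by
      rw [Finset.add_sum_erase _ _ (Finset.mem_univ z)]; exact hu.2
    have hubarnn : ∀ k, 0 ≤ ubar k := by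
      intro k
      by_cases h : k = z
      · simp [hubar, h]
      · simp only [hubar, if_neg h]
        exact add_nonneg (hu.1 k) (mul_nonneg huz.le (hlamnonneg k h))
    have hubarsum : ∑ k, ubar k = 1 := by
      rw [← Finset.add_sum_erase _ _ (Finset.mem_univ z), hubarz, zero_add]
      have : ∀ k ∈ Finset.univ.erase z, ubar k = u k + u z * lam k := fun k hk => by
        simp [hubar, (Finset.mem_erase.1 hk).1]
      rw [Finset.sum_congr rfl this, Finset.sum_add_distrib, ← Finset.mul_sum, hlamsum]
      linarith [husum]
    have hmem : ubar ∈ simplex m := ⟨hubarnn, hubarsum⟩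
    have hmix : ∀ y, ∑ k, ubar k * P k y = ∑ k, u k * P k y := by
      intro y
      rw [← Finset.add_sum_erase _ (fun k => ubar k * P k y) (Finset.mem_univ z),
        ← Finset.add_sum_erase _ (fun k => u k * P k y) (Finset.mem_univ z),
        hubarz, zero_mul, zero_add]
      have : ∀ k ∈ Finset.univ.erase z, ubar k * P k y = u k * P k y + u z * (lam k * P k y) :=
        fun k hk => by simp only [hubar, if_neg (Finset.mem_erase.1 hk).1]; ring
      rw [Finset.sum_congr rfl this, Finset.sum_add_distrib, ← Finset.mul_sum, ← hconv y]
      ring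
    have hent : ∑ k, ubar k * entH (P k) < ∑ k, u k * entH (P k) := by
      rw [← Finset.add_sum_erase _ (fun k => ubar k * entH (P k)) (Finset.mem_univ z),
        ← Finset.add_sum_erase _ (fun k => u k * entH (P k)) (Finset.mem_univ z),
        hubarz, zero_mul, zero_add]
      have : ∀ k ∈ Finset.univ.erase z, ubar k * entH (P k)
          = u k * entH (P k) + u z * (lam k * entH (P k)) :=
        fun k hk => by simp only [hubar, if_neg (Finset.mem_erase.1 hk).1]; ring
      rw [Finset.sum_congr rfl this, Finset.sum_add_distrib, ← Finset.mul_sum]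
      have := mul_lt_mul_of_pos_left hkey huz
      linarith
    refine ⟨ubar, hmem, hubarz, ?_⟩
    have hmixeq : entH (fun y => ∑ k, ubar k * P k y) = entH (fun y => ∑ k, u k * P k y) := by
      congr 1; funext y; exact hmix y
    rw [phi, phi, hmixeq]
    linarith [hent]
  refine ⟨main, ?_⟩
  intro ustar hmem hmax
  by_contra h
  have hpos : 0 < ustar z := lt_of_le_of_ne (hmem.1 z) (Ne.symm h)
  obtain ⟨ubar, hub, _, hlt⟩ := main ustar hmem hpos
  exact absurd (hmax ubar hub) (not_le.2 hlt)
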